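/- arXiv:2209.08136 — 4 statements merged into one kernel-verified Lean document; each statement's English description precedes it below -/
import Mathlib

section
/- Let a ∈ (ℓ₀)^{r×r} and φ a compactly supported continuous refinable vector function with φ = C_a φ, where C_a f := 2∑_{k∈ℤ} a(k) f(2·−k). Then for all n ∈ ℕ and j = 0,…,m with φ ∈ (C^m)^r, φ^{(j)}(2^{−n}k) = 2^{(j+1)n} (a_n ∗ u_{φ,j})(k) for every k ∈ ℤ, where a_n := 2^{−n} S_a^n(δ I_r) and u_{φ,j} := φ^{(j)}|_ℤ. -/
/-- The vector subdivision operator `(S_a v)(j) = 2 ∑_{k∈ℤ} v(k) a(j−2k)`. -/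
noncomputable def sdOp {r : ℕ} (a : ℤ → Matrix (Fin r) (Fin r) ℂ)
    (v : ℤ → Matrix (Fin r) (Fin r) ℂ) (j : ℤ) : Matrix (Fin r) (Fin r) ℂ :=
  (2 : ℂ) • ∑ᶠ k : ℤ, v k * a (j - 2 * k)

/-- The Dirac sequence `δ I_r`. -/
noncomputable def diracI {r : ℕ} : ℤ → Matrix (Fin r) (Fin r) ℂ :=
  fun k => if k = 0 then 1 else 0

/-- `a_n := 2^{−n} S_a^n (δ I_r)`. -/
noncomputable def aN {r : ℕ} (a : ℤ → Matrix (Fin r) (Fin r) ℂ) (n : ℕ) :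
    ℤ → Matrix (Fin r) (Fin r) ℂ :=
  fun k => ((2 : ℂ) ^ n)⁻¹ • ((sdOp a)^[n] diracI) k

/-!
Differentiating the refinement equation `j` times gives
`φ^{(j)}(x) = 2^{j+1} ∑ a(k) φ^{(j)}(2x − k)`, i.e. `ψ := φ^{(j)}` is refinable with mask
`2^j a`. For such a `ψ`, substituting the refinement equation into `∑ v(ℓ) ψ(y − ℓ)` and
regrouping the double sum over `(ℓ, k)` by `q = 2ℓ + k` turns it into
`2^j ∑ (S_a v)(q) ψ(2y − q)`. Starting from `v = δ I_r` and iterating `n` times gives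
`ψ(x) = 2^{jn} ∑ (S_a^n δ I_r)(ℓ) ψ(2^n x − ℓ)`, and at `x = 2^{−n} k` all arguments on the
right are integers.
-/

open Function Matrix

theorem HasDerivAt.const_mulVec {𝕜 : Type*} [RCLike 𝕜] {m n : Type*} [Fintype m] [Fintype n]
    {f : ℝ → n → 𝕜} {f' : n → 𝕜} {x : ℝ} (M : Matrix m n 𝕜) (hf : HasDerivAt f f' x) :
    HasDerivAt (fun y => M *ᵥ f y) (M *ᵥ f') x :=
  (M.mulVecLin.restrictScalars ℝ).toContinuousLinearMap.hasFDerivAt.comp_hasDerivAt x hf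

theorem DifferentiableAt.hasDerivAt_comp_mul_sub {E : Type*} [NormedAddCommGroup E]
    [NormedSpace ℝ E] {g : ℝ → E} {c t x : ℝ} (hg : DifferentiableAt ℝ g (c * x - t)) :
    HasDerivAt (fun y => g (c * y - t)) (c • deriv g (c * x - t)) x :=
  hg.hasDerivAt.scomp x (((hasDerivAt_id x).const_mul c).sub_const t |>.congr_deriv (mul_one c))

section Refinable

variable {r : ℕ} {a : ℤ → Matrix (Fin r) (Fin r) ℂ}

lemma support_mulVec_subset (f : ℤ → Fin r → ℂ) : support (fun k => a k *ᵥ f k) ⊆ support a :=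
  fun k hk h => hk (by simp [h])

theorem deriv_eq_of_refinable {g : ℝ → Fin r → ℂ} {c : ℂ} (ha : (support a).Finite)
    (hg : Differentiable ℝ g) (href : ∀ y, g y = c • ∑ᶠ k, a k *ᵥ g (2 * y - k)) (x : ℝ) :
    deriv g x = (2 * c) • ∑ᶠ k, a k *ᵥ deriv g (2 * x - k) := by
  have hs (f : ℤ → Fin r → ℂ) : support (fun k => a k *ᵥ f k) ⊆ ha.toFinset :=
    (support_mulVec_subset f).trans ha.coe_toFinset.superset
  have hsum : g = fun y => c • ∑ k ∈ ha.toFinset, a k *ᵥ g (2 * y - k) :=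
    funext fun y => by rw [href y, finsum_eq_sum_of_support_subset _ (hs _)]
  have hderiv : HasDerivAt (fun y => c • ∑ k ∈ ha.toFinset, a k *ᵥ g (2 * y - k))
      (c • ∑ k ∈ ha.toFinset, a k *ᵥ ((2 : ℝ) • deriv g (2 * x - k))) x :=
    (HasDerivAt.fun_sum fun (k : ℤ) _ =>
      ((hg (2 * x - k)).hasDerivAt_comp_mul_sub).const_mulVec (a k)).const_smul c
  conv_lhs => rw [hsum]
  rw [hderiv.deriv, finsum_eq_sum_of_support_subset _ (hs _)]
  simp only [mulVec_smul, ← Finset.smul_sum]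
  -- the chain rule produces `(2 : ℝ) •`; both it and `(2 : ℂ) •` unfold to `v + v`
  rw [mul_smul, two_smul, two_smul, smul_add]

theorem iteratedDeriv_eq_of_refinable {m : ℕ} {φ : ℝ → Fin r → ℂ} {c : ℂ}
    (ha : (support a).Finite) (hφ : ContDiff ℝ m φ)
    (href : ∀ y, φ y = c • ∑ᶠ k, a k *ᵥ φ (2 * y - k)) {j : ℕ} (hj : j ≤ m) (x : ℝ) :
    iteratedDeriv j φ x = (2 ^ j * c) • ∑ᶠ k, a k *ᵥ iteratedDeriv j φ (2 * x - k) := by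
  induction j generalizing x with
  | zero => simpa using href x
  | succ j ih =>
    have hdiff : Differentiable ℝ (iteratedDeriv j φ) :=
      hφ.differentiable_iteratedDeriv j (by exact_mod_cast hj)
    simp only [iteratedDeriv_succ]
    rw [deriv_eq_of_refinable ha hdiff (ih (by omega)), pow_succ', mul_assoc]

end Refinable

section FiniteSums

variable {ι R : Type*} {m n : Type*} [Fintype n] [CommSemiring R]

theorem mulVec_finsum (M : Matrix m n R) {f : ι → n → R} (hf : f.HasFiniteSupport) :
    M *ᵥ ∑ᶠ i, f i = ∑ᶠ i, M *ᵥ f i :=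
  map_finsum M.mulVecLin hf

theorem finsum_mulVec {f : ι → Matrix m n R} (hf : f.HasFiniteSupport) (w : n → R) :
    (∑ᶠ i, f i) *ᵥ w = ∑ᶠ i, f i *ᵥ w :=
  map_finsum (mulVec.addMonoidHomLeft w) hf

end FiniteSums

theorem finsum_finsum_comp_sub_two_mul {M : Type*} [AddCommMonoid M] (F : ℤ × ℤ → M)
    (hF : F.HasFiniteSupport) :
    ∑ᶠ ℓ, ∑ᶠ k, F (ℓ, k) = ∑ᶠ q, ∑ᶠ ℓ, F (ℓ, q - 2 * ℓ) := by
  let e : ℤ × ℤ ≃ ℤ × ℤ :=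
    { toFun := fun p => (p.2, p.1 - 2 * p.2)
      invFun := fun p => (2 * p.1 + p.2, p.1)
      left_inv := fun p => by simp
      right_inv := fun p => by simp }
  rw [← finsum_curry F hF, ← finsum_comp_equiv e, finsum_curry (fun p => F (e p))]
  · rfl
  · exact hF.preimage e.injective.injOn

section Subdivision

variable {r : ℕ} {a : ℤ → Matrix (Fin r) (Fin r) ℂ}

theorem finite_support_sdOp (ha : (support a).Finite) {v : ℤ → Matrix (Fin r) (Fin r) ℂ}
    (hv : (support v).Finite) : (support (sdOp a v)).Finite := by
  refine ((hv.prod ha).image fun p => 2 * p.1 + p.2).subset fun q hq => ?_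
  obtain ⟨ℓ, hℓ⟩ : ∃ ℓ, v ℓ * a (q - 2 * ℓ) ≠ 0 := by
    by_contra! h
    simp [sdOp, h] at hq
  exact ⟨(ℓ, q - 2 * ℓ), ⟨left_ne_zero_of_mul hℓ, right_ne_zero_of_mul hℓ⟩, by simp⟩

theorem finite_support_iterate_sdOp (ha : (support a).Finite) (n : ℕ) :
    (support ((sdOp a)^[n] diracI)).Finite := by
  induction n with
  | zero => exact (Set.finite_singleton 0).subset fun k hk => by_contra fun h => hk (if_neg h)
  | succ n ih => exact iterate_succ_apply' (sdOp a) n diracI ▸ finite_support_sdOp ha ih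

variable {g : ℝ → Fin r → ℂ} {c : ℂ}

theorem finsum_mulVec_comp_sub_eq_smul_finsum_sdOp (ha : (support a).Finite)
    (href : ∀ y, g y = (2 * c) • ∑ᶠ k, a k *ᵥ g (2 * y - k))
    {v : ℤ → Matrix (Fin r) (Fin r) ℂ} (hv : (support v).Finite) (y : ℝ) :
    ∑ᶠ ℓ, v ℓ *ᵥ g (y - ℓ) = c • ∑ᶠ q, sdOp a v q *ᵥ g (2 * y - q) := by
  set F : ℤ × ℤ → Fin r → ℂ := fun p => (v p.1 * a p.2) *ᵥ g (2 * y - (2 * p.1 + p.2 : ℤ))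
  have hF : F.HasFiniteSupport := (hv.prod ha).subset fun p hp =>
    ⟨fun h => hp (by simp [F, h]), fun h => hp (by simp [F, h])⟩
  have hlhs : ∀ ℓ : ℤ, v ℓ *ᵥ g (y - ℓ) = (2 * c) • ∑ᶠ k, F (ℓ, k) := fun ℓ => by
    rw [href, mulVec_smul, mulVec_finsum _ (ha.subset (support_mulVec_subset _))]
    refine congrArg _ (finsum_congr fun k => ?_)
    simp only [F, mulVec_mulVec]
    congr 2
    push_cast
    ring
  have hrhs : ∀ q : ℤ, sdOp a v q *ᵥ g (2 * y - q) = (2 : ℂ) • ∑ᶠ ℓ, F (ℓ, q - 2 * ℓ) :=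
    fun q => by
      rw [sdOp, smul_mulVec, finsum_mulVec (hv.subset fun ℓ hℓ h => hℓ (by simp [h]))]
      simp only [F, add_sub_cancel]
  simp only [hlhs, hrhs, ← smul_finsum, finsum_finsum_comp_sub_two_mul F hF, smul_smul,
    mul_comm c]

theorem eq_smul_finsum_iterate_sdOp (ha : (support a).Finite)
    (href : ∀ y, g y = (2 * c) • ∑ᶠ k, a k *ᵥ g (2 * y - k)) (n : ℕ) (x : ℝ) :
    g x = c ^ n • ∑ᶠ ℓ, (sdOp a)^[n] diracI ℓ *ᵥ g (2 ^ n * x - ℓ) := by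
  induction n with
  | zero =>
    rw [finsum_eq_single _ 0 fun ℓ hℓ => by simp [diracI, hℓ]]
    simp [diracI]
  | succ n ih =>
    rw [ih, finsum_mulVec_comp_sub_eq_smul_finsum_sdOp ha href (finite_support_iterate_sdOp ha n),
      smul_smul, ← pow_succ, iterate_succ_apply', pow_succ' (2 : ℝ), mul_assoc]

end Subdivision

theorem deriv_dyadic_values_general {r : ℕ} (m : ℕ) (a : ℤ → Matrix (Fin r) (Fin r) ℂ)
    (ha : (Function.support a).Finite)
    (φ : ℝ → Fin r → ℂ) (hφc : ContDiff ℝ (m : ℕ∞) φ)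
    (href : ∀ x : ℝ, φ x = (2 : ℂ) • ∑ᶠ k : ℤ, (a k).mulVec (φ (2 * x - (k : ℝ))))
    (j : ℕ) (hj : j ≤ m) (n : ℕ) (k : ℤ) :
    iteratedDeriv j φ (((2 : ℝ) ^ n)⁻¹ * (k : ℝ)) =
      (2 : ℂ) ^ ((j + 1) * n) •
        ∑ᶠ ℓ : ℤ, (aN a n (k - ℓ)).mulVec (iteratedDeriv j φ (ℓ : ℝ)) := by
  have hrefj (y : ℝ) :
      iteratedDeriv j φ y = (2 * 2 ^ j : ℂ) • ∑ᶠ ℓ, a ℓ *ᵥ iteratedDeriv j φ (2 * y - ℓ) := by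
    rw [mul_comm]
    exact iteratedDeriv_eq_of_refinable ha hφc href hj y
  have hdyadic (ℓ : ℤ) : (2 : ℝ) ^ n * ((2 ^ n)⁻¹ * k) - ℓ = ((k - ℓ : ℤ) : ℝ) := by
    push_cast
    field_simp
  rw [eq_smul_finsum_iterate_sdOp ha hrefj n (((2 : ℝ) ^ n)⁻¹ * k),
    ← finsum_comp_equiv (Equiv.subLeft k)]
  simp only [aN, smul_mulVec, ← smul_finsum, smul_smul, hdyadic, Equiv.subLeft_apply,
    sub_sub_cancel]
  congr 1
  field_simp
  ring

/-- If `φ ∈ (C^m)^r` is compactly supported, continuous and refinable (`φ = C_a φ`), then for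
`j ≤ m`, all `n` and `k ∈ ℤ`: `φ^{(j)}(2^{−n}k) = 2^{(j+1)n} (a_n ∗ u_{φ,j})(k)` with
`u_{φ,j} := φ^{(j)}|_ℤ`. -/
theorem deriv_dyadic_values {r : ℕ} (m : ℕ) (a : ℤ → Matrix (Fin r) (Fin r) ℂ)
    (ha : (Function.support a).Finite)
    (φ : ℝ → Fin r → ℂ) (hφc : ContDiff ℝ (m : ℕ∞) φ) (hφs : HasCompactSupport φ)
    (href : ∀ x : ℝ, φ x = (2 : ℂ) • ∑ᶠ k : ℤ, (a k).mulVec (φ (2 * x - (k : ℝ))))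
    (j : ℕ) (hj : j ≤ m) (n : ℕ) (k : ℤ) :
    iteratedDeriv j φ (((2 : ℝ) ^ n)⁻¹ * (k : ℝ)) =
      (2 : ℂ) ^ ((j + 1) * n) •
        ∑ᶠ ℓ : ℤ, (aN a n (k - ℓ)).mulVec (iteratedDeriv j φ (ℓ : ℝ)) :=
  deriv_dyadic_values_general m a ha φ hφc href j hj n k
end

section
/- Let ν_a ∈ (ℓ₀)^{1×r} with \widehat{ν_a}(0) ≠ 0, and suppose p = ∑_{k∈ℤ}(p∗ν_a)(k) φ(·−k) holds for all polynomials p of degree at most m_a−1, where φ ∈ (C^m)^r is compactly supported and m ≤ m_a−1. Then for j = 0,…,m, the polynomial identity p_{m_a−j−1} = p_{m_a−1} ∗ (ν_a ∗ u_{φ,j}) holds, where p_ℓ(x) := x^ℓ/ℓ! and u_{φ,j} := φ^{(j)}|_ℤ, with p∗v := ∑_{k∈ℤ} p(·−k)v(k) for a polynomial p and finitely supported sequence v. -/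
/-- The Fourier series of a vector-valued sequence. -/
noncomputable def fhatV {q : ℕ} (u : ℤ → Fin q → ℂ) (ξ : ℝ) : Fin q → ℂ :=
  ∑ᶠ k : ℤ, Complex.exp (-(Complex.I * (k : ℂ) * (ξ : ℂ))) • u k

/-!
Apply the reproduction identity to `p = X^n / n!` (`n = m_a - 1`) and differentiate `j` times:
near any point only finitely many shifts `φ(· - k)` are nonzero, so the sum may be differentiated
term by term, giving `x^(n-j) / (n-j)! = ∑_k (p ∗ ν)(k) · φ^{(j)}(x - k)`. At an integer `x` the
right-hand side is `((p ∗ ν) ∗ u_{φ,j})(x) = (p ∗ (ν ∗ u_{φ,j}))(x)` by associativity of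
convolution. Both `x^(n-j) / (n-j)!` and `p ∗ (ν ∗ u_{φ,j})` are polynomials, and polynomials
that agree on `ℤ` are equal.
-/

open Function Polynomial Topology Filter

theorem finsum_comm_of_finite_support {α β M : Type*} [AddCommMonoid M] {f : α → β → M}
    (hf : (support (uncurry f)).Finite) :
    ∑ᶠ a, ∑ᶠ b, f a b = ∑ᶠ b, ∑ᶠ a, f a b := by
  have hf' : (support (uncurry f ∘ Prod.swap)).Finite := hf.preimage Prod.swap_injective.injOn
  calc ∑ᶠ a, ∑ᶠ b, f a b = ∑ᶠ p : α × β, uncurry f p := (finsum_curry _ hf).symm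
    _ = ∑ᶠ p : β × α, uncurry f p.swap := (finsum_comp_equiv (Equiv.prodComm β α)).symm
    _ = ∑ᶠ b, ∑ᶠ a, f a b := finsum_curry _ hf'

section Convolution

variable {R ι : Type*} [CommRing R] [Fintype ι]

theorem finite_support_finsum_dotProduct_conv {a b : ℤ → ι → R} (ha : (support a).Finite)
    (hb : (support b).Finite) :
    (support fun k : ℤ => ∑ᶠ l : ℤ, a (k - l) ⬝ᵥ b l).Finite := by
  refine (ha.image2 (· + ·) hb).subset fun k hk => ?_
  obtain ⟨l, hl⟩ : ∃ l, a (k - l) ⬝ᵥ b l ≠ 0 := by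
    by_contra! h
    exact hk (finsum_eq_zero_of_forall_eq_zero h)
  exact ⟨k - l, fun h => hl (by simp [h]), l, fun h => hl (by simp [h]), sub_add_cancel k l⟩

variable [NoZeroDivisors R]

theorem finsum_mul_dotProduct {α : Type*} {a : α → ι → R} (ha : (support a).Finite) (g : α → R)
    (v : ι → R) :
    (fun i => ∑ᶠ l, g l * a l i) ⬝ᵥ v = ∑ᶠ l, g l * (a l ⬝ᵥ v) := by
  simp only [dotProduct, finsum_mul, Finset.mul_sum, mul_assoc]
  refine sum_finsum_comm _ (fun i l => g l * (a l i * v i)) fun i _ => ha.subset ?_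
  intro l hl h
  simp [h] at hl

theorem finsum_conv_dotProduct_assoc (P : R → R) {a b : ℤ → ι → R} (ha : (support a).Finite)
    (hb : (support b).Finite) (t : ℤ) :
    ∑ᶠ k : ℤ, (fun i => ∑ᶠ l : ℤ, P ((k : R) - l) * a l i) ⬝ᵥ b (t - k) =
      ∑ᶠ k : ℤ, P ((t : R) - k) * ∑ᶠ l : ℤ, a (k - l) ⬝ᵥ b l := by
  have hfin : (support (uncurry fun l k : ℤ => P ((t : R) - k) * (a (k - l) ⬝ᵥ b l))).Finite := by
    refine ((hb.prod ha).image fun q => (q.1, q.2 + q.1)).subset ?_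
    rintro ⟨l, k⟩ h
    refine ⟨(l, k - l), ⟨fun hl => h ?_, fun hkl => h ?_⟩, by simp⟩
    · simp [hl]
    · simp [hkl]
  calc _ = ∑ᶠ k : ℤ, ∑ᶠ l : ℤ, P ((k : R) - l) * (a l ⬝ᵥ b (t - k)) :=
        finsum_congr fun k => finsum_mul_dotProduct ha _ _
    _ = ∑ᶠ s : ℤ, ∑ᶠ l : ℤ, P ((t : R) - s - l) * (a l ⬝ᵥ b s) := by
        rw [← finsum_comp_equiv (Equiv.subLeft t)]
        simp [Equiv.subLeft_apply]
    _ = ∑ᶠ l : ℤ, ∑ᶠ k : ℤ, P ((t : R) - k) * (a (k - l) ⬝ᵥ b l) := by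
        refine finsum_congr fun l => ?_
        rw [← finsum_comp_equiv (Equiv.addRight l)
          (f := fun k => P (t - k) * (a (k - l) ⬝ᵥ b l))]
        simp [sub_add_eq_sub_sub_swap]
    _ = _ := by
        rw [finsum_comm_of_finite_support hfin]
        simp only [mul_finsum]

end Convolution

namespace Polynomial

section SeqConv

variable {R : Type*} [CommRing R]

/-- The convolution `p ∗ v` of the paper; it is `0` (junk) unless `v` is finitely supported. -/
noncomputable def seqConv (p : R[X]) (v : ℤ → R) : R[X] :=
  ∑ᶠ k : ℤ, p.comp (X - C (k : R)) * C (v k)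

theorem eval_seqConv (p : R[X]) {v : ℤ → R} (hv : (Function.support v).Finite) (x : R) :
    (p.seqConv v).eval x = ∑ᶠ k : ℤ, p.eval (x - k) * v k := by
  rw [seqConv, ← coe_evalRingHom, map_finsum _ (hv.subset fun k hk h => hk (by simp [h]))]
  simp

theorem eq_of_eval_intCast_eq [IsDomain R] [CharZero R] {p q : R[X]}
    (h : ∀ n : ℤ, p.eval (n : R) = q.eval (n : R)) : p = q :=
  eq_of_infinite_eval_eq p q <|
    (Set.infinite_range_of_injective Int.cast_injective).mono <| by
      rintro _ ⟨n, rfl⟩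
      exact h n

end SeqConv

section MonomialDivFactorial

variable {K : Type*} [Field K]

noncomputable def monomialDivFactorial (ℓ : ℕ) : K[X] := C (ℓ.factorial : K)⁻¹ * X ^ ℓ

theorem degree_monomialDivFactorial_le (ℓ : ℕ) : (monomialDivFactorial ℓ : K[X]).degree ≤ ℓ :=
  degree_C_mul_X_pow_le _ _

theorem eval_monomialDivFactorial (ℓ : ℕ) (z : K) :
    (monomialDivFactorial ℓ).eval z = z ^ ℓ / ℓ.factorial := by
  simp [monomialDivFactorial, div_eq_inv_mul]

variable [CharZero K]

theorem derivative_monomialDivFactorial_succ (ℓ : ℕ) :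
    derivative (monomialDivFactorial (ℓ + 1) : K[X]) = monomialDivFactorial ℓ := by
  simp only [monomialDivFactorial, derivative_C_mul_X_pow, Nat.factorial_succ]
  congr 2
  push_cast
  field_simp

theorem iterate_derivative_monomialDivFactorial {n j : ℕ} (hj : j ≤ n) :
    derivative^[j] (monomialDivFactorial n : K[X]) = monomialDivFactorial (n - j) := by
  induction j with
  | zero => rfl
  | succ j ih =>
    rw [iterate_succ_apply', ih (by omega), show n - j = n - (j + 1) + 1 by omega,
      derivative_monomialDivFactorial_succ]

end MonomialDivFactorial

theorem iteratedDeriv_eval_ofReal (p : ℂ[X]) (j : ℕ) :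
    iteratedDeriv j (fun x : ℝ => p.eval (x : ℂ)) =
      fun x : ℝ => (derivative^[j] p).eval (x : ℂ) := by
  induction j with
  | zero => rfl
  | succ j ih =>
    ext x
    rw [iteratedDeriv_succ, ih, iterate_succ_apply']
    exact ((derivative^[j] p).hasDerivAt (x : ℂ)).comp_ofReal.deriv

end Polynomial

section IteratedDeriv

variable {𝕜 E F : Type*} [NontriviallyNormedField 𝕜] [NormedAddCommGroup E] [NormedSpace 𝕜 E]
  [NormedAddCommGroup F] [NormedSpace 𝕜 F]

theorem ContinuousLinearMap.iteratedDeriv_comp_left (L : E →L[𝕜] F) {f : 𝕜 → E} {n : ℕ} {x : 𝕜}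
    (hf : ContDiffAt 𝕜 n f x) :
    iteratedDeriv n (fun y => L (f y)) x = L (iteratedDeriv n f x) := by
  simp only [iteratedDeriv_eq_iteratedFDeriv]
  exact congrArg (fun T => T fun _ => 1) (L.iteratedFDeriv_comp_left hf le_rfl)

theorem support_iteratedDeriv_subset (n : ℕ) (f : 𝕜 → E) :
    support (iteratedDeriv n f) ⊆ tsupport f := fun x hx =>
  support_iteratedFDeriv_subset (𝕜 := 𝕜) n fun h =>
    hx (by simp [iteratedDeriv_eq_iteratedFDeriv, h])

end IteratedDeriv

theorem IsCompact.finite_preimage_intCast {K : Set ℝ} (hK : IsCompact K) :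
    ((↑) ⁻¹' K : Set ℤ).Finite := by
  have := Int.tendsto_coe_cofinite hK.compl_mem_cocompact
  rwa [mem_map, mem_cofinite, Set.preimage_compl, compl_compl] at this

theorem HasCompactSupport.exists_finset_eventually_sub_intCast_notMem_tsupport {E : Type*}
    [Zero E] {φ : ℝ → E} (hφ : HasCompactSupport φ) (x : ℝ) :
    ∃ S : Finset ℤ, ∀ᶠ y : ℝ in 𝓝 x, ∀ k ∉ S, y - k ∉ tsupport φ := by
  have hK := (((isCompact_closedBall x 1).prod hφ.isCompact).image
    (continuous_fst.sub continuous_snd)).finite_preimage_intCast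
  refine ⟨hK.toFinset, eventually_of_mem (Metric.closedBall_mem_nhds x one_pos) ?_⟩
  intro y hy k hk hyk
  exact hk (hK.mem_toFinset.2 ⟨(y, y - k), ⟨hy, hyk⟩, sub_sub_cancel y k⟩)

theorem iteratedDeriv_finsum_comp_sub_intCast {E F : Type*} [NormedAddCommGroup E]
    [NormedSpace ℝ E] [NormedAddCommGroup F] [NormedSpace ℝ F] {φ : ℝ → E} {j : ℕ}
    (hφ : ContDiff ℝ j φ) (hφs : HasCompactSupport φ) (L : ℤ → E →L[ℝ] F) (x : ℝ) :
    iteratedDeriv j (fun y => ∑ᶠ k : ℤ, L k (φ (y - k))) x =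
      ∑ᶠ k : ℤ, L k (iteratedDeriv j φ (x - k)) := by
  obtain ⟨S, hS⟩ := hφs.exists_finset_eventually_sub_intCast_notMem_tsupport x
  have hloc : (fun y => ∑ᶠ k : ℤ, L k (φ (y - k))) =ᶠ[𝓝 x]
      fun y => ∑ k ∈ S, L k (φ (y - k)) := by
    filter_upwards [hS] with y hy
    refine finsum_eq_sum_of_support_subset _ fun k hk => ?_
    by_contra hkS
    exact hk (by simp [image_eq_zero_of_notMem_tsupport (hy k hkS)])
  have hshift (k : ℤ) : ContDiff ℝ j fun y => φ (y - k) :=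
    hφ.comp (contDiff_id.sub contDiff_const)
  rw [hloc.iteratedDeriv_eq, iteratedDeriv_fun_sum (f := fun k y => L k (φ (y - k)))
    fun k _ => ((L k).contDiff.comp (hshift k)).contDiffAt]
  refine ((finsum_eq_sum_of_support_subset _ fun k hk => ?_).trans
    (Finset.sum_congr rfl fun k _ => ?_)).symm
  · by_contra hkS
    exact hS.self_of_nhds k hkS (support_iteratedDeriv_subset j φ fun h => hk (by simp [h]))
  · rw [(L k).iteratedDeriv_comp_left (hshift k).contDiffAt, iteratedDeriv_comp_sub_const]

theorem polynomial_convolution_identity_general {r ma m : ℕ} (hm : m ≤ ma - 1)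
    (ν : ℤ → Fin r → ℂ) (hν : (Function.support ν).Finite)
    (φ : ℝ → Fin r → ℂ) (hφc : ContDiff ℝ (m : ℕ∞) φ) (hφs : HasCompactSupport φ)
    (hrep : ∀ p : Polynomial ℂ, p.degree ≤ (ma - 1 : ℕ) → ∀ x : ℝ,
      Polynomial.eval (x : ℂ) p =
        ∑ᶠ k : ℤ, dotProduct
          (fun i => ∑ᶠ l : ℤ, Polynomial.eval (((k : ℂ) - (l : ℂ))) p * ν l i)
          (φ (x - (k : ℝ))))
    (j : ℕ) (hj : j ≤ m) :
    ∀ x : ℝ, ((x : ℂ)) ^ (ma - j - 1) / (Nat.factorial (ma - j - 1) : ℂ) =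
      ∑ᶠ k : ℤ, (((x : ℂ) - (k : ℂ)) ^ (ma - 1) / (Nat.factorial (ma - 1) : ℂ)) *
        (∑ᶠ l : ℤ, dotProduct (ν (k - l)) (iteratedDeriv j φ (l : ℝ))) := by
  intro x
  set n := ma - 1
  set c : ℤ → Fin r → ℂ := fun k i =>
    ∑ᶠ l : ℤ, (monomialDivFactorial n).eval ((k : ℂ) - l) * ν l i
  set u : ℤ → Fin r → ℂ := fun l => iteratedDeriv j φ l
  have hu : (support u).Finite :=
    hφs.isCompact.finite_preimage_intCast.subset fun l hl => support_iteratedDeriv_subset j φ hl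
  have hder (y : ℝ) : (monomialDivFactorial (n - j)).eval (y : ℂ) =
      ∑ᶠ k : ℤ, c k ⬝ᵥ iteratedDeriv j φ (y - k) := by
    have h := congrArg (iteratedDeriv j · y) (funext (hrep _ (degree_monomialDivFactorial_le n)))
    have hL := iteratedDeriv_finsum_comp_sub_intCast (hφc.of_le (by exact_mod_cast hj)) hφs
      (fun k => LinearMap.toContinuousLinearMap (dotProductBilin ℝ ℝ (c k))) y
    simp only [iteratedDeriv_eval_ofReal,
      iterate_derivative_monomialDivFactorial (hj.trans hm)] at h
    simp only [LinearMap.coe_toContinuousLinearMap', dotProductBilin_apply_apply] at hL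
    exact h.trans hL
  have hw := finite_support_finsum_dotProduct_conv hν hu
  have hpoly : monomialDivFactorial (n - j) =
      (monomialDivFactorial n).seqConv fun k => ∑ᶠ l, ν (k - l) ⬝ᵥ u l := by
    refine eq_of_eval_intCast_eq fun t => ?_
    rw [eval_seqConv _ hw, ← finsum_conv_dotProduct_assoc (monomialDivFactorial n).eval hν hu]
    simpa [u] using hder t
  have hx := congrArg (Polynomial.eval (x : ℂ)) hpoly
  simp only [eval_seqConv _ hw, eval_monomialDivFactorial] at hx
  rwa [show ma - j - 1 = n - j by omega]

/-- If `ν_a ∈ (ℓ₀)^{1×r}` with `\widehat{ν_a}(0) ≠ 0` reproduces all polynomials `p` of degree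
at most `m_a−1` through `p = ∑_k (p∗ν_a)(k) φ(·−k)`, with `φ ∈ (C^m)^r` compactly supported and
`m ≤ m_a−1`, then `p_{m_a−j−1} = p_{m_a−1} ∗ (ν_a ∗ u_{φ,j})` for `j = 0,…,m`, where
`p_ℓ(x) = x^ℓ/ℓ!` and `u_{φ,j} = φ^{(j)}|_ℤ`. -/
theorem polynomial_convolution_identity {r ma m : ℕ} (hma : 1 ≤ ma) (hm : m ≤ ma - 1)
    (ν : ℤ → Fin r → ℂ) (hν : (Function.support ν).Finite) (hν0 : fhatV ν 0 ≠ 0)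
    (φ : ℝ → Fin r → ℂ) (hφc : ContDiff ℝ (m : ℕ∞) φ) (hφs : HasCompactSupport φ)
    (hrep : ∀ p : Polynomial ℂ, p.degree ≤ (ma - 1 : ℕ) → ∀ x : ℝ,
      Polynomial.eval (x : ℂ) p =
        ∑ᶠ k : ℤ, dotProduct
          (fun i => ∑ᶠ l : ℤ, Polynomial.eval (((k : ℂ) - (l : ℂ))) p * ν l i)
          (φ (x - (k : ℝ))))
    (j : ℕ) (hj : j ≤ m) :
    ∀ x : ℝ, ((x : ℂ)) ^ (ma - j - 1) / (Nat.factorial (ma - j - 1) : ℂ) =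
      ∑ᶠ k : ℤ, (((x : ℂ) - (k : ℂ)) ^ (ma - 1) / (Nat.factorial (ma - 1) : ℂ)) *
        (∑ᶠ l : ℤ, dotProduct (ν (k - l)) (iteratedDeriv j φ (l : ℝ))) :=
  polynomial_convolution_identity_general hm ν hν φ hφc hφs hrep j hj
end

section
/- Let a ∈ (ℓ₀)^{r×r}, u ∈ (ℓ₀)^r, both supported in [−N,N], and let η : ℝ → ℂ^r be continuous with support in [−N,N]. Define u_n := a_n ∗ u with \widehat{a_n}(ξ) := \widehat{a}(2^{n−1}ξ)···\widehat{a}(ξ). Suppose lim_{n→∞} sup_{k∈ℤ} ‖u_n(k) 2^{(τ+1)n} − η(2^{−n}k)‖ = 0 for some τ ≥ 0. Then lim_{n→∞} 2^{τn} \widehat{u_n}(2^{−n}ξ) = \widehat{η}(ξ) for every ξ ∈ ℝ, where \widehat{η}(ξ) := ∫_ℝ η(x)e^{−ixξ}dx. -/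
/-!
The symbol `fhat (b n)` is that of the cascade `a_{n+1}(m) = ∑ₗ a(l) a_n(m - 2ⁿl)`, and a finitely
supported sequence is determined by its symbol (orthogonality of the `e^{ikξ}` on `[0, 2π]`).
Hence `b n` is supported in `[-(2ⁿ-1)N, (2ⁿ-1)N]` and `u_n = b n ∗ u` in `[-2ⁿN, 2ⁿN]`, so
`2^{τn} û_n(2⁻ⁿξ)` is a sum of `2ⁿ⁺¹N + 1` terms, each within `2⁻ⁿε` of the matching term of the
Riemann sum `2⁻ⁿ ∑ₖ e^{-i2⁻ⁿkξ} η(2⁻ⁿk)`; the two sums differ by at most `(2N + 1)ε`. The dyadic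
Riemann sums of a continuous compactly supported function are the integrals of the step functions
`x ↦ f(2⁻ⁿ⌈2ⁿx⌉)`, which converge to `∫ f` by dominated convergence.
-/

open MeasureTheory

/-- The Fourier series of a matrix-valued sequence. -/
noncomputable def fhat {p q : ℕ} (u : ℤ → Matrix (Fin p) (Fin q) ℂ) (ξ : ℝ) :
    Matrix (Fin p) (Fin q) ℂ :=
  ∑ᶠ k : ℤ, Complex.exp (-(Complex.I * (k : ℂ) * (ξ : ℂ))) • u k

/-- Convolution of a matrix-valued sequence with a vector-valued sequence. -/
noncomputable def convMV {r : ℕ} (b : ℤ → Matrix (Fin r) (Fin r) ℂ)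
    (u : ℤ → Fin r → ℂ) (k : ℤ) : Fin r → ℂ :=
  ∑ᶠ l : ℤ, (b (k - l)).mulVec (u l)

/-- The Fourier transform of a vector function. -/
noncomputable def ft {q : ℕ} (f : ℝ → Fin q → ℂ) (ξ : ℝ) : Fin q → ℂ :=
  ∫ x : ℝ, Complex.exp (-(Complex.I * (x : ℂ) * (ξ : ℂ))) • f x

open Filter Topology Complex

lemma finsum_smul_eq_sum_of_support_subset {ι R M : Type*} [AddCommMonoid M] [Zero R]
    [SMulZeroClass R M] (w : ι → R) {u : ι → M} {s : Finset ι} (hs : Function.support u ⊆ s) :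
    ∑ᶠ i, w i • u i = ∑ i ∈ s, w i • u i :=
  finsum_eq_sum_of_support_subset _ ((Function.support_smul_subset_right w u).trans hs)

def SupportedIn {M : Type*} [Zero M] (u : ℤ → M) (R : ℤ) : Prop :=
  ∀ k, u k ≠ 0 → |k| ≤ R

namespace SupportedIn

variable {M : Type*} [Zero M] {u : ℤ → M} {R : ℤ}

lemma mono (h : SupportedIn u R) {R' : ℤ} (hR : R ≤ R') : SupportedIn u R' :=
  fun k hk => (h k hk).trans hR

lemma support_subset (h : SupportedIn u R) : Function.support u ⊆ Finset.Icc (-R) R :=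
  fun k hk => by simpa [abs_le] using h k hk

lemma hasFiniteSupport (h : SupportedIn u R) : Function.HasFiniteSupport u :=
  (Finset.Icc (-R) R).finite_toSet.subset h.support_subset

lemma convMV {r : ℕ} {b : ℤ → Matrix (Fin r) (Fin r) ℂ} {u : ℤ → Fin r → ℂ} {N : ℤ}
    (hb : SupportedIn b R) (hu : SupportedIn u N) : SupportedIn (convMV b u) (R + N) := by
  intro k hk
  obtain ⟨l, hl⟩ : ∃ l, (b (k - l)).mulVec (u l) ≠ 0 := by
    by_contra! h
    exact hk (finsum_eq_zero_of_forall_eq_zero h)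
  have hbl := hb (k - l) fun h0 => hl (by simp [h0])
  have hul := hu l fun h0 => hl (by simp [h0])
  calc |k| = |(k - l) + l| := by rw [sub_add_cancel]
    _ ≤ R + N := (abs_add_le _ _).trans (add_le_add hbl hul)

end SupportedIn

section Cascade

variable {r : ℕ}

noncomputable def dilatedConv (a c : ℤ → Matrix (Fin r) (Fin r) ℂ) (d m : ℤ) :
    Matrix (Fin r) (Fin r) ℂ :=
  ∑ᶠ l, a l * c (m - d * l)

lemma SupportedIn.dilatedConv {a c : ℤ → Matrix (Fin r) (Fin r) ℂ} {N M d : ℤ}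
    (ha : SupportedIn a N) (hc : SupportedIn c M) (hd : 0 ≤ d) :
    SupportedIn (dilatedConv a c d) (M + d * N) := by
  intro m hm
  obtain ⟨l, hl⟩ : ∃ l, a l * c (m - d * l) ≠ 0 := by
    by_contra! h
    exact hm (finsum_eq_zero_of_forall_eq_zero h)
  have hal := ha l fun h0 => hl (by simp [h0])
  have hcl := hc (m - d * l) fun h0 => hl (by simp [h0])
  calc |m| = |(m - d * l) + d * l| := by rw [sub_add_cancel]
    _ ≤ M + d * N := by
      refine (abs_add_le _ _).trans (add_le_add hcl ?_)
      rw [abs_mul, abs_of_nonneg hd]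
      exact mul_le_mul_of_nonneg_left hal hd

lemma fhat_dilatedConv {a c : ℤ → Matrix (Fin r) (Fin r) ℂ} (ha : Function.HasFiniteSupport a)
    (hc : Function.HasFiniteSupport c) (d : ℤ) (ξ : ℝ) :
    fhat (dilatedConv a c d) ξ = fhat a (d * ξ) * fhat c ξ := by
  set A := ha.toFinset
  have hA : Function.support a ⊆ A := ha.coe_toFinset.superset
  set F : ℤ → ℤ → Matrix (Fin r) (Fin r) ℂ := fun l m =>
    cexp (-(I * m * ξ)) • (a l * c (m - d * l))
  have hF : ∀ l, Function.HasFiniteSupport (F l) := fun l =>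
    .fun_smul_right _ (.fun_mul_right _ (hc.fun_comp_of_injective sub_left_injective))
  have hshift : ∀ l, ∑ᶠ m, F l m = (cexp (-(I * l * (d * ξ : ℝ))) • a l) * fhat c ξ := by
    intro l
    rw [fhat, mul_finsum' _ _ (hc.fun_smul_right _),
      ← finsum_comp_equiv (Equiv.addRight (d * l))]
    refine finsum_congr fun k => ?_
    simp only [F, Equiv.coe_addRight, add_sub_cancel_right, smul_mul_smul_comm, ← Complex.exp_add]
    congr 2
    push_cast
    ring
  calc fhat (dilatedConv a c d) ξ = ∑ᶠ m, ∑ l ∈ A, F l m := by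
        refine finsum_congr fun m => ?_
        rw [dilatedConv, finsum_eq_sum_of_support_subset _ (s := A)
          ((Function.support_mul_subset_left _ _).trans hA), Finset.smul_sum]
    _ = ∑ l ∈ A, ∑ᶠ m, F l m := finsum_sum_comm A _ fun l _ => hF l
    _ = fhat a (d * ξ) * fhat c ξ := by
        simp_rw [hshift, ← Finset.sum_mul]
        congr 1
        exact (finsum_smul_eq_sum_of_support_subset _ hA).symm

/-- The paper's `a_n`. -/
noncomputable def cascade (a : ℤ → Matrix (Fin r) (Fin r) ℂ) : ℕ → ℤ → Matrix (Fin r) (Fin r) ℂ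
  | 0 => Pi.single 0 1
  | n + 1 => dilatedConv a (cascade a n) (2 ^ n)

lemma SupportedIn.cascade {a : ℤ → Matrix (Fin r) (Fin r) ℂ} {N : ℤ} (ha : SupportedIn a N)
    (n : ℕ) : SupportedIn (cascade a n) ((2 ^ n - 1) * N) := by
  induction n with
  | zero =>
    intro k hk
    have : k = 0 := by by_contra h; simp [_root_.cascade, h] at hk
    simp [this]
  | succ n ih =>
    refine (ha.dilatedConv ih (d := 2 ^ n) (by positivity)).mono (le_of_eq ?_)
    ring

lemma fhat_cascade {a : ℤ → Matrix (Fin r) (Fin r) ℂ} {N : ℤ} (ha : SupportedIn a N) (n : ℕ)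
    (ξ : ℝ) : fhat (cascade a n) ξ =
      (((List.range n).reverse).map (fun j => fhat a ((2 : ℝ) ^ j * ξ))).prod := by
  induction n with
  | zero =>
    rw [fhat, finsum_eq_single _ 0 fun k hk => by simp [cascade, hk]]
    simp [cascade]
  | succ n ih =>
    rw [cascade, fhat_dilatedConv ha.hasFiniteSupport (ha.cascade n).hasFiniteSupport, ih,
      List.range_succ]
    simp

end Cascade

lemma integral_exp_I_int_mul (n : ℤ) :
    ∫ ξ in (0 : ℝ)..2 * Real.pi, cexp (I * n * ξ) = if n = 0 then (2 * Real.pi : ℂ) else 0 := by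
  split_ifs with hn
  · simp [hn]
  · have hIn : I * n ≠ 0 := mul_ne_zero I_ne_zero (by exact_mod_cast hn)
    rw [integral_exp_mul_complex hIn,
      show I * n * ((2 * Real.pi : ℝ) : ℂ) = n * (2 * Real.pi * I) by push_cast; ring,
      exp_int_mul_two_pi_mul_I]
    simp

lemma integral_exp_mul_finsum {c : ℤ → ℂ} (hc : Function.HasFiniteSupport c) (m : ℤ) :
    ∫ ξ in (0 : ℝ)..2 * Real.pi, cexp (I * m * ξ) * ∑ᶠ k : ℤ, cexp (-(I * k * ξ)) • c k =
      2 * Real.pi * c m := by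
  set s := insert m hc.toFinset
  have hs : Function.support c ⊆ s := hc.coe_toFinset.superset.trans (by simp [s])
  have hsum : ∀ ξ : ℝ, cexp (I * m * ξ) * ∑ᶠ k : ℤ, cexp (-(I * k * ξ)) • c k =
      ∑ k ∈ s, cexp (I * (m - k : ℤ) * ξ) * c k := by
    intro ξ
    rw [finsum_smul_eq_sum_of_support_subset _ hs, Finset.mul_sum]
    refine Finset.sum_congr rfl fun k _ => ?_
    rw [smul_eq_mul, ← mul_assoc, ← Complex.exp_add]
    push_cast
    ring_nf
  simp_rw [hsum]
  rw [intervalIntegral.integral_finsetSum fun k _ =>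
    (by fun_prop : Continuous _).intervalIntegrable _ _]
  simp_rw [intervalIntegral.integral_mul_const, integral_exp_I_int_mul, sub_eq_zero, ite_mul,
    zero_mul]
  rw [Finset.sum_ite_eq, if_pos (Finset.mem_insert_self m _)]

lemma fhat_apply {p q : ℕ} {u : ℤ → Matrix (Fin p) (Fin q) ℂ} (hu : Function.HasFiniteSupport u)
    (ξ : ℝ) (i : Fin p) (j : Fin q) :
    fhat u ξ i j = ∑ᶠ k : ℤ, cexp (-(I * k * ξ)) • u k i j :=
  (Matrix.entryAddMonoidHom ℂ i j).map_finsum (hu.fun_smul_right _)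

lemma eq_of_fhat_eq {p q : ℕ} {u v : ℤ → Matrix (Fin p) (Fin q) ℂ}
    (hu : Function.HasFiniteSupport u) (hv : Function.HasFiniteSupport v)
    (h : ∀ ξ, fhat u ξ = fhat v ξ) : u = v := by
  funext m
  ext i j
  refine mul_left_cancel₀ (by simp [Real.pi_ne_zero] : (2 * Real.pi : ℂ) ≠ 0) ?_
  have entry : ∀ w : ℤ → Matrix (Fin p) (Fin q) ℂ, Function.HasFiniteSupport w →
      Function.HasFiniteSupport fun k => w k i j :=
    fun w hw => hw.subset fun k hk h0 => hk (by simp [h0])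
  rw [← integral_exp_mul_finsum (entry u hu), ← integral_exp_mul_finsum (entry v hv)]
  simp_rw [← fhat_apply hu, ← fhat_apply hv, h]

lemma norm_sum_Icc_exp_smul_le {F : Type*} [SeminormedAddCommGroup F] [NormedSpace ℂ F] {R : ℤ}
    (hR : 0 ≤ R) {v : ℤ → F} {ε : ℝ} (hv : ∀ k, ‖v k‖ ≤ ε) (ξ : ℝ) :
    ‖∑ k ∈ Finset.Icc (-R) R, cexp (-(I * k * ξ)) • v k‖ ≤ (2 * R + 1) * ε := by
  have hexp : ∀ k : ℤ, ‖cexp (-(I * k * ξ))‖ = 1 := fun k => by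
    rw [norm_exp, show -(I * k * ξ) = ((-(k * ξ) : ℝ) : ℂ) * I by push_cast; ring]
    simp
  calc ‖∑ k ∈ Finset.Icc (-R) R, cexp (-(I * k * ξ)) • v k‖
      ≤ ∑ k ∈ Finset.Icc (-R) R, ε := by
        refine (norm_sum_le _ _).trans (Finset.sum_le_sum fun k _ => ?_)
        rw [norm_smul, hexp, one_mul]
        exact hv k
    _ = (2 * R + 1) * ε := by
        rw [Finset.sum_const, Int.card_Icc, nsmul_eq_mul, ← Int.cast_natCast,
          Int.toNat_of_nonneg (by omega)]
        push_cast
        ring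

lemma two_rpow_mul_eq_inv_mul (τ : ℝ) (n : ℕ) :
    (2 : ℝ) ^ (τ * n) = ((2 : ℝ) ^ n)⁻¹ * 2 ^ ((τ + 1) * n) := by
  rw [add_mul, one_mul, Real.rpow_add two_pos, Real.rpow_natCast]
  field_simp

lemma norm_smul_fhatV_sub_riemann_sum_le {q N : ℕ} (n : ℕ) {w : ℤ → Fin q → ℂ}
    (hw : SupportedIn w (2 ^ n * N)) (g : ℝ → Fin q → ℂ) (c : ℂ) {δ : ℝ}
    (hδ : ∀ k : ℤ, ‖c • w k - g (((2 : ℝ) ^ n)⁻¹ * k)‖ ≤ δ) (ξ : ℝ) :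
    ‖((((2 : ℝ) ^ n)⁻¹ : ℝ) * c) • fhatV w (((2 : ℝ) ^ n)⁻¹ * ξ) -
      ∑ k ∈ Finset.Icc (-(2 ^ n * N : ℤ)) (2 ^ n * N),
        ((2 : ℝ) ^ n)⁻¹ • (cexp (-(I * (((2 : ℝ) ^ n)⁻¹ * k : ℝ) * ξ)) • g (((2 : ℝ) ^ n)⁻¹ * k))‖ ≤
      (2 * N + 1) * δ := by
  have hdiff : ((((2 : ℝ) ^ n)⁻¹ : ℝ) * c) • fhatV w (((2 : ℝ) ^ n)⁻¹ * ξ) -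
      ∑ k ∈ Finset.Icc (-(2 ^ n * N : ℤ)) (2 ^ n * N),
        ((2 : ℝ) ^ n)⁻¹ • (cexp (-(I * (((2 : ℝ) ^ n)⁻¹ * k : ℝ) * ξ)) • g (((2 : ℝ) ^ n)⁻¹ * k)) =
      ∑ k ∈ Finset.Icc (-(2 ^ n * N : ℤ)) (2 ^ n * N), cexp (-(I * k * (((2 : ℝ) ^ n)⁻¹ * ξ : ℝ))) •
        (((2 : ℝ) ^ n)⁻¹ • (c • w k - g (((2 : ℝ) ^ n)⁻¹ * k))) := by
    rw [fhatV, finsum_smul_eq_sum_of_support_subset _ hw.support_subset, Finset.smul_sum, ← Finset.sum_sub_distrib]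
    refine Finset.sum_congr rfl fun k _ => ?_
    have hexp : cexp (-(I * (((2 : ℝ) ^ n)⁻¹ * k : ℝ) * ξ)) =
        cexp (-(I * k * (((2 : ℝ) ^ n)⁻¹ * ξ : ℝ))) := by
      push_cast
      ring_nf
    rw [hexp]
    module
  have hterm (k : ℤ) :
      ‖((2 : ℝ) ^ n)⁻¹ • (c • w k - g (((2 : ℝ) ^ n)⁻¹ * k))‖ ≤ ((2 : ℝ) ^ n)⁻¹ * δ := by
    rw [norm_smul, Real.norm_of_nonneg (by positivity)]
    exact mul_le_mul_of_nonneg_left (hδ k) (by positivity)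
  have hδ0 : 0 ≤ δ := (norm_nonneg _).trans (hδ 0)
  have hinv : ((2 : ℝ) ^ n)⁻¹ ≤ 1 := inv_le_one_of_one_le₀ (one_le_pow₀ one_le_two)
  rw [hdiff]
  calc _ ≤ (2 * (2 ^ n * N : ℤ) + 1) * (((2 : ℝ) ^ n)⁻¹ * δ) :=
        norm_sum_Icc_exp_smul_le (by positivity) hterm _
    _ = (2 * N + ((2 : ℝ) ^ n)⁻¹) * δ := by
        push_cast
        field_simp
    _ ≤ (2 * N + 1) * δ := by gcongr

section Riemann

variable {E : Type*} [NormedAddCommGroup E] [NormedSpace ℝ E] [CompleteSpace E]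

lemma integral_comp_intCeil {F : ℤ → E} {s : Finset ℤ} (hs : Function.support F ⊆ s) :
    ∫ y : ℝ, F ⌈y⌉ = ∑ k ∈ s, F k := by
  have hind : ∀ y : ℝ, F ⌈y⌉ = ∑ k ∈ s, (Set.Ioc ((k : ℝ) - 1) k).indicator (fun _ => F k) y := by
    intro y
    simp_rw [Set.indicator_apply, Set.mem_Ioc, ← Int.ceil_eq_iff]
    rw [Finset.sum_ite_eq]
    split_ifs with h
    · rfl
    · exact Function.notMem_support.1 fun h' => h (hs h')
  simp_rw [hind]
  rw [integral_finsetSum _ fun k _ => (integrable_indicator_iff measurableSet_Ioc).2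
    (integrableOn_const measure_Ioc_lt_top.ne)]
  refine Finset.sum_congr rfl fun k _ => ?_
  rw [integral_indicator_const _ measurableSet_Ioc, measureReal_def, Real.volume_Ioc]
  simp

lemma inv_two_pow_mul_ceil_mem_Ico (n : ℕ) (x : ℝ) :
    ((2 : ℝ) ^ n)⁻¹ * ⌈(2 : ℝ) ^ n * x⌉ ∈ Set.Ico x (x + ((2 : ℝ) ^ n)⁻¹) := by
  have h2n : (0 : ℝ) < 2 ^ n := by positivity
  rw [Set.mem_Ico, le_inv_mul_iff₀ h2n, inv_mul_lt_iff₀ h2n, mul_add, mul_inv_cancel₀ h2n.ne']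
  exact ⟨Int.le_ceil _, Int.ceil_lt_add_one _⟩

lemma tendsto_inv_two_pow_mul_ceil (x : ℝ) :
    Tendsto (fun n : ℕ => ((2 : ℝ) ^ n)⁻¹ * ⌈(2 : ℝ) ^ n * x⌉) atTop (𝓝 x) := by
  have hup : Tendsto (fun n : ℕ => x + ((2 : ℝ) ^ n)⁻¹) atTop (𝓝 x) := by
    simpa using (tendsto_inv_atTop_zero.comp
      (tendsto_pow_atTop_atTop_of_one_lt one_lt_two)).const_add x
  exact tendsto_of_tendsto_of_tendsto_of_le_of_le tendsto_const_nhds hup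
    (fun n => (inv_two_pow_mul_ceil_mem_Ico n x).1)
    (fun n => (inv_two_pow_mul_ceil_mem_Ico n x).2.le)

lemma integral_comp_inv_two_pow_mul_ceil {f : ℝ → E} {N : ℕ}
    (hN : ∀ x : ℝ, (N : ℝ) < |x| → f x = 0) (n : ℕ) :
    ∫ x, f (((2 : ℝ) ^ n)⁻¹ * ⌈(2 : ℝ) ^ n * x⌉) =
      ∑ k ∈ Finset.Icc (-(2 ^ n * N : ℤ)) (2 ^ n * N),
        ((2 : ℝ) ^ n)⁻¹ • f (((2 : ℝ) ^ n)⁻¹ * k) := by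
  have h2n : (0 : ℝ) < 2 ^ n := by positivity
  have hs : Function.support (fun k : ℤ => f (((2 : ℝ) ^ n)⁻¹ * k)) ⊆
      Finset.Icc (-(2 ^ n * N : ℤ)) (2 ^ n * N) := by
    intro k hk
    by_contra hk'
    rw [Finset.coe_Icc, Set.mem_Icc, ← abs_le, not_le] at hk'
    have hk'' : (2 : ℝ) ^ n * N < |(k : ℝ)| := by exact_mod_cast hk'
    refine hk (hN _ ?_)
    rwa [abs_mul, abs_inv, abs_of_pos h2n, lt_inv_mul_iff₀ h2n]
  rw [Measure.integral_comp_mul_left (fun y => f (((2 : ℝ) ^ n)⁻¹ * ⌈y⌉)),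
    integral_comp_intCeil hs, Finset.smul_sum, abs_inv, abs_of_pos h2n]

theorem tendsto_dyadic_riemann_sum {f : ℝ → E} (hf : Continuous f) {N : ℕ}
    (hN : ∀ x : ℝ, (N : ℝ) < |x| → f x = 0) :
    Tendsto (fun n : ℕ => ∑ k ∈ Finset.Icc (-(2 ^ n * N : ℤ)) (2 ^ n * N),
      ((2 : ℝ) ^ n)⁻¹ • f (((2 : ℝ) ^ n)⁻¹ * k)) atTop (𝓝 (∫ x, f x)) := by
  simp_rw [← integral_comp_inv_two_pow_mul_ceil hN]
  obtain ⟨C, hC⟩ := hf.bounded_above_of_compact_support <|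
    HasCompactSupport.intro (isCompact_Icc (a := -(N : ℝ)) (b := N)) fun x hx =>
      hN x (by rwa [Set.mem_Icc, ← abs_le, not_le] at hx)
  refine tendsto_integral_of_dominated_convergence
    ((Set.Icc (-(N : ℝ) - 1) (N + 1)).indicator fun _ => C)
    (fun n => hf.comp_aestronglyMeasurable (by fun_prop : Measurable _).aestronglyMeasurable)
    ((integrable_indicator_iff measurableSet_Icc).2 (integrableOn_const measure_Icc_lt_top.ne))
    (fun n => ae_of_all _ fun x => ?_)
    (ae_of_all _ fun x => (hf.tendsto x).comp (tendsto_inv_two_pow_mul_ceil x))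
  by_cases hx : x ∈ Set.Icc (-(N : ℝ) - 1) (N + 1)
  · rw [Set.indicator_of_mem hx]
    exact hC _
  · obtain ⟨hlo, hhi⟩ := inv_two_pow_mul_ceil_mem_Ico n x
    have hinv : ((2 : ℝ) ^ n)⁻¹ ≤ 1 := inv_le_one_of_one_le₀ (one_le_pow₀ one_le_two)
    rw [Set.indicator_of_notMem hx, hN _ ?_, norm_zero]
    rw [Set.mem_Icc, not_and_or, not_le, not_le] at hx
    rw [lt_abs]
    rcases hx with hx | hx
    · right; linarith
    · left; linarith

end Riemann

theorem fhat_un_tendsto_ft_general {r : ℕ} (N : ℕ) (a : ℤ → Matrix (Fin r) (Fin r) ℂ)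
    (ha : ∀ k : ℤ, a k ≠ 0 → |k| ≤ (N : ℤ))
    (u : ℤ → Fin r → ℂ) (hu : ∀ k : ℤ, u k ≠ 0 → |k| ≤ (N : ℤ))
    (η : ℝ → Fin r → ℂ) (hηc : Continuous η) (hηs : ∀ x : ℝ, (N : ℝ) < |x| → η x = 0)
    (b : ℕ → ℤ → Matrix (Fin r) (Fin r) ℂ) (hb : ∀ n, (Function.support (b n)).Finite)
    (hbf : ∀ n : ℕ, ∀ ξ : ℝ, fhat (b n) ξ =
      (((List.range n).reverse).map (fun j => fhat a ((2 : ℝ) ^ j * ξ))).prod)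
    (τ : ℝ)
    (hconv : ∀ ε : ℝ, 0 < ε → ∃ N₀ : ℕ, ∀ n ≥ N₀, ∀ k : ℤ,
      ‖(((2 : ℝ) ^ ((τ + 1) * (n : ℝ)) : ℝ) : ℂ) • convMV (b n) u k -
        η (((2 : ℝ) ^ n)⁻¹ * (k : ℝ))‖ < ε) :
    ∀ ξ : ℝ, Filter.Tendsto
      (fun n : ℕ => (((2 : ℝ) ^ (τ * (n : ℝ)) : ℝ) : ℂ) •
        fhatV (convMV (b n) u) (((2 : ℝ) ^ n)⁻¹ * ξ))
      Filter.atTop (nhds (ft η ξ)) := by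
  intro ξ
  have ha' : SupportedIn a N := ha
  have hbN (n : ℕ) : SupportedIn (b n) ((2 ^ n - 1) * N) := by
    rw [eq_of_fhat_eq (hb n) (ha'.cascade n).hasFiniteSupport
      fun ξ => (hbf n ξ).trans (fhat_cascade ha' n ξ).symm]
    exact ha'.cascade n
  have hun (n : ℕ) : SupportedIn (convMV (b n) u) (2 ^ n * N) :=
    ((hbN n).convMV hu).mono (by ring_nf; rfl)
  have hS := tendsto_dyadic_riemann_sum (f := fun x => cexp (-(I * x * ξ)) • η x) (by fun_prop)
    (N := N) fun x hx => by simp [hηs x hx]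
  refine tendsto_of_tendsto_of_dist hS (Metric.tendsto_atTop.2 fun ε hε => ?_)
  obtain ⟨n₀, hn₀⟩ := hconv (ε / (2 * N + 2)) (by positivity)
  refine ⟨n₀, fun n hn => ?_⟩
  rw [Real.dist_0_eq_abs, abs_of_nonneg dist_nonneg, dist_comm, dist_eq_norm,
    two_rpow_mul_eq_inv_mul, ofReal_mul]
  calc _ ≤ (2 * N + 1) * (ε / (2 * N + 2)) :=
        norm_smul_fhatV_sub_riemann_sum_le n (hun n) η _ (fun k => (hn₀ n hn k).le) ξ
    _ < (2 * N + 2) * (ε / (2 * N + 2)) := by gcongr; linarith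
    _ = ε := by field_simp

/-- If `u_n := a_n ∗ u` (with `\widehat{a_n}(ξ) = \widehat{a}(2^{n−1}ξ)···\widehat{a}(ξ)`,
`a` and `u` supported in `[−N,N]`) satisfies
`sup_k ‖u_n(k)2^{(τ+1)n} − η(2^{−n}k)‖ → 0` for a continuous `η` supported in `[−N,N]`,
then `2^{τn}\widehat{u_n}(2^{−n}ξ) → \widehat{η}(ξ)` for every `ξ ∈ ℝ`. -/
theorem fhat_un_tendsto_ft {r : ℕ} (N : ℕ) (a : ℤ → Matrix (Fin r) (Fin r) ℂ)
    (ha : ∀ k : ℤ, a k ≠ 0 → |k| ≤ (N : ℤ))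
    (u : ℤ → Fin r → ℂ) (hu : ∀ k : ℤ, u k ≠ 0 → |k| ≤ (N : ℤ))
    (η : ℝ → Fin r → ℂ) (hηc : Continuous η) (hηs : ∀ x : ℝ, (N : ℝ) < |x| → η x = 0)
    (b : ℕ → ℤ → Matrix (Fin r) (Fin r) ℂ) (hb : ∀ n, (Function.support (b n)).Finite)
    (hbf : ∀ n : ℕ, ∀ ξ : ℝ, fhat (b n) ξ =
      (((List.range n).reverse).map (fun j => fhat a ((2 : ℝ) ^ j * ξ))).prod)
    (τ : ℝ) (hτ : 0 ≤ τ)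
    (hconv : ∀ ε : ℝ, 0 < ε → ∃ N₀ : ℕ, ∀ n ≥ N₀, ∀ k : ℤ,
      ‖(((2 : ℝ) ^ ((τ + 1) * (n : ℝ)) : ℝ) : ℂ) • convMV (b n) u k -
        η (((2 : ℝ) ^ n)⁻¹ * (k : ℝ))‖ < ε) :
    ∀ ξ : ℝ, Filter.Tendsto
      (fun n : ℕ => (((2 : ℝ) ^ (τ * (n : ℝ)) : ℝ) : ℂ) •
        fhatV (convMV (b n) u) (((2 : ℝ) ^ n)⁻¹ * ξ))
      Filter.atTop (nhds (ft η ξ)) :=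
  fhat_un_tendsto_ft_general N a ha u hu η hηc hηs b hb hbf τ hconv
end

section
/- Let a ∈ (ℓ₀)^{r×r} and u ∈ (ℓ₀)^r be supported in [−N,N], w_0 : ℤ → ℂ^{1×r}, and φ : ℝ → ℂ^r be supported in [−N,N] with φ ∈ (C^j)^r. Define η := ∑_{k∈ℤ} w_0(k) φ(·−k). Then for every K > 0, n ∈ ℕ, and β_j ∈ ℂ: max_{k∈ℤ∩[−2^nK, 2^nK]} |[(S_a^n w_0)∗u](k) 2^{jn} − β_j η^{(j)}(2^{−n}k)| ≤ C_{K,N,w_0} · sup_{k∈ℤ} ‖[(S_a^n(δI_r))∗u](k) 2^{jn} − β_j φ^{(j)}(2^{−n}k)‖, where C_{K,N,w_0} := ∑_{ℓ=−N−K}^{N+K} ‖w_0(ℓ)‖. -/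
/-- The vector subdivision operator acting on row-vector-valued sequences. -/
noncomputable def sdRow {r : ℕ} (a : ℤ → Matrix (Fin r) (Fin r) ℂ)
    (v : ℤ → Fin r → ℂ) (j : ℤ) : Fin r → ℂ :=
  (2 : ℂ) • ∑ᶠ k : ℤ, Matrix.vecMul (v k) (a (j - 2 * k))

open Function Finset Matrix Filter Topology

section Finsum

variable {α β M : Type*} [AddCommMonoid M]

theorem finsum_comm_of_finite {f : α → β → M} {s : Set α} (hs : s.Finite)
    (hsupp : ∀ a b, f a b ≠ 0 → a ∈ s) (hfin : ∀ a ∈ s, HasFiniteSupport (f a)) :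
    ∑ᶠ a, ∑ᶠ b, f a b = ∑ᶠ b, ∑ᶠ a, f a b := by
  have hmem : ∀ a b, f a b ≠ 0 → a ∈ hs.toFinset := fun a b h => hs.mem_toFinset.2 (hsupp a b h)
  have hsum : support (fun a => ∑ᶠ b, f a b) ⊆ hs.toFinset := by
    intro a ha
    obtain ⟨b, hb⟩ : ∃ b, f a b ≠ 0 := by
      by_contra! h
      exact ha (finsum_eq_zero_of_forall_eq_zero h)
    exact hmem a b hb
  rw [finsum_eq_sum_of_support_subset _ hsum,
    sum_finsum_comm _ f fun a ha => hfin a (hs.mem_toFinset.1 ha)]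
  exact finsum_congr fun b => (finsum_eq_sum_of_support_subset _ fun a ha => hmem a b ha).symm

theorem Function.HasFiniteSupport.of_apply_eq_zero {M' : Type*} [Zero M'] {f : α → M}
    {g : α → M'} (hg : HasFiniteSupport g) (h : ∀ x, g x = 0 → f x = 0) : HasFiniteSupport f :=
  Set.Finite.subset hg fun x hfx hgx => hfx (h x hgx)

section Matrix

variable {ι κ R : Type*} [Fintype ι] [CommSemiring R]

theorem finsum_vecMul {f : α → ι → R} (hf : HasFiniteSupport f) (M : Matrix ι κ R) :
    (∑ᶠ a, f a) ᵥ* M = ∑ᶠ a, f a ᵥ* M :=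
  map_finsum ((vecMulBilin R R).flip M) hf

theorem vecMul_finsum (v : ι → R) {f : α → Matrix ι κ R} (hf : HasFiniteSupport f) :
    v ᵥ* ∑ᶠ a, f a = ∑ᶠ a, v ᵥ* f a :=
  map_finsum (vecMulBilin R R v) hf

theorem finsum_dotProduct {f : α → ι → R} (hf : HasFiniteSupport f) (v : ι → R) :
    (∑ᶠ a, f a) ⬝ᵥ v = ∑ᶠ a, f a ⬝ᵥ v :=
  map_finsum ((dotProductBilin R R).flip v) hf

theorem dotProduct_finsum (v : ι → R) {f : α → ι → R} (hf : HasFiniteSupport f) :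
    v ⬝ᵥ ∑ᶠ a, f a = ∑ᶠ a, v ⬝ᵥ f a :=
  map_finsum (dotProductBilin R R v) hf

end Matrix

end Finsum

theorem hasFiniteSupport_of_abs_le {M : Type*} [Zero M] {f : ℤ → M} (C : ℤ)
    (h : ∀ k, f k ≠ 0 → |k| ≤ C) : HasFiniteSupport f :=
  (Set.finite_Icc (-C) C).subset fun k hk => abs_le.1 (h k hk)

theorem Function.HasFiniteSupport.comp_sub_mul {M : Type*} [Zero M] {f : ℤ → M}
    (hf : HasFiniteSupport f) (m : ℤ) {c : ℤ} (hc : c ≠ 0) :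
    HasFiniteSupport fun l => f (m - c * l) :=
  hf.comp_of_injective (g := fun l => m - c * l) fun x y h => by simpa [hc] using h

theorem norm_dotProduct_le {ι R : Type*} [Fintype ι] [SeminormedRing R] (v w : ι → R) :
    ‖v ⬝ᵥ w‖ ≤ (∑ i, ‖v i‖) * ‖w‖ := by
  rw [dotProduct, sum_mul]
  refine (norm_sum_le _ _).trans (sum_le_sum fun i _ => ?_)
  exact (norm_mul_le _ _).trans (mul_le_mul_of_nonneg_left (norm_le_pi_norm w i) (norm_nonneg _))

theorem mem_Icc_of_abs_sub_two_pow_mul_le {n N K : ℕ} {k q : ℤ} (hk : |k| ≤ 2 ^ n * K)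
    (hq : |k - 2 ^ n * q| ≤ 2 ^ n * N) : q ∈ Icc (-(N : ℤ) - K) (N + K) := by
  have h : 2 ^ n * |q| ≤ 2 ^ n * (N + K : ℤ) := by
    have := abs_sub_abs_le_abs_sub (2 ^ n * q) k
    rw [abs_mul, abs_pow, abs_two, abs_sub_comm] at this
    linarith
  have := abs_le.1 (le_of_mul_le_mul_left h (by positivity))
  rw [mem_Icc]
  constructor <;> linarith

section IteratedDeriv

theorem ContDiff.dotProduct_left {ι E : Type*} [Fintype ι] [NormedAddCommGroup E]
    [NormedSpace ℝ E] {n : WithTop ℕ∞} {f : E → ι → ℂ} (hf : ContDiff ℝ n f) (w : ι → ℂ) :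
    ContDiff ℝ n fun y => w ⬝ᵥ f y :=
  (LinearMap.toContinuousLinearMap (dotProductBilin ℂ ℝ w)).contDiff.comp hf

theorem iteratedDeriv_dotProduct_left {ι : Type*} [Fintype ι] {j : ℕ} (w : ι → ℂ)
    {f : ℝ → ι → ℂ} {x : ℝ} (hf : ContDiffAt ℝ j f x) :
    iteratedDeriv j (fun y => w ⬝ᵥ f y) x = w ⬝ᵥ iteratedDeriv j f x := by
  let L : (ι → ℂ) →L[ℝ] ℂ := LinearMap.toContinuousLinearMap (dotProductBilin ℂ ℝ w)
  have h := L.iteratedFDeriv_comp_left hf le_rfl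
  simp only [iteratedDeriv_eq_iteratedFDeriv]
  exact congrArg (fun T => T fun _ => 1) h

theorem iteratedDeriv_eq_zero_of_lt_abs {F : Type*} [NormedAddCommGroup F] [NormedSpace ℝ F]
    {f : ℝ → F} {R : ℝ} (hf : ∀ x, R < |x| → f x = 0) (j : ℕ) {x : ℝ} (hx : R < |x|) :
    iteratedDeriv j f x = 0 := by
  have hloc : f =ᶠ[𝓝 x] fun _ => 0 :=
    eventually_of_mem ((isOpen_lt continuous_const continuous_abs).mem_nhds hx) hf
  rw [hloc.iteratedDeriv_eq, iteratedDeriv_fun_const_zero]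

theorem iteratedDeriv_finsum_dotProduct_translate {ι : Type*} [Fintype ι] {j : ℕ}
    {φ : ℝ → ι → ℂ} {R : ℝ} (hφc : ContDiff ℝ j φ) (hφs : ∀ x, R < |x| → φ x = 0)
    (w : ℤ → ι → ℂ) (x : ℝ) :
    iteratedDeriv j (fun y => ∑ᶠ l : ℤ, w l ⬝ᵥ φ (y - l)) x =
      ∑ᶠ l : ℤ, w l ⬝ᵥ iteratedDeriv j φ (x - l) := by
  set s : Finset ℤ := Ioo ⌊x - R - 1⌋ ⌈x + R + 1⌉
  have hs : ∀ y : ℝ, ∀ l : ℤ, |y - x| < 1 → |y - l| ≤ R → l ∈ s := by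
    intro y l hy hl
    have := abs_lt.1 hy
    have := abs_le.1 hl
    rw [mem_Ioo, Int.floor_lt, Int.lt_ceil]
    constructor <;> linarith
  have hlocal : (fun y => ∑ᶠ l : ℤ, w l ⬝ᵥ φ (y - l)) =ᶠ[𝓝 x]
      fun y => ∑ l ∈ s, w l ⬝ᵥ φ (y - l) := by
    filter_upwards [Metric.ball_mem_nhds x one_pos] with y hy
    refine finsum_eq_sum_of_support_subset _ fun l hl => hs y l hy ?_
    by_contra h
    exact hl (by simp only [hφs _ (not_le.1 h), dotProduct_zero])
  have hsupp : support (fun l : ℤ => w l ⬝ᵥ iteratedDeriv j φ (x - l)) ⊆ s := by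
    intro l hl
    refine hs x l (by simp) ?_
    by_contra h
    exact hl (by simp only [iteratedDeriv_eq_zero_of_lt_abs hφs j (not_le.1 h), dotProduct_zero])
  have hterm : ∀ l : ℤ, ContDiff ℝ j fun y => φ (y - l) :=
    fun l => hφc.comp (contDiff_id.sub contDiff_const)
  rw [hlocal.iteratedDeriv_eq, finsum_eq_sum_of_support_subset _ hsupp,
    iteratedDeriv_fun_sum fun l _ => (hterm l).dotProduct_left (w l) |>.contDiffAt]
  refine sum_congr rfl fun l _ => ?_
  rw [iteratedDeriv_dotProduct_left _ (hterm l).contDiffAt, iteratedDeriv_comp_sub_const]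

end IteratedDeriv

/-- `(S_a^n(δ I_r)) ∗ u`. -/
noncomputable def sdIterConv {r : ℕ} (a : ℤ → Matrix (Fin r) (Fin r) ℂ) (n : ℕ)
    (u : ℤ → Fin r → ℂ) (k : ℤ) : Fin r → ℂ :=
  ∑ᶠ l, ((sdOp a)^[n] diracI) (k - l) *ᵥ u l

section Subdivision

variable {r N : ℕ} {a : ℤ → Matrix (Fin r) (Fin r) ℂ}

theorem abs_le_of_iterate_sdOp_diracI_ne_zero (ha : ∀ k, a k ≠ 0 → |k| ≤ (N : ℤ)) (n : ℕ)
    {k : ℤ} (hk : ((sdOp a)^[n] diracI) k ≠ 0) : |k| ≤ (2 ^ n - 1) * N := by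
  induction n generalizing k with
  | zero =>
    have : k = 0 := by
      by_contra h
      exact hk (by simp [diracI, h])
    simp [this]
  | succ n ih =>
    rw [iterate_succ_apply', sdOp] at hk
    obtain ⟨m, hm⟩ : ∃ m, ((sdOp a)^[n] diracI) m * a (k - 2 * m) ≠ 0 := by
      by_contra! h
      exact hk (by rw [finsum_eq_zero_of_forall_eq_zero h, smul_zero])
    have hm' := ih (left_ne_zero_of_mul hm)
    have hkm := ha _ (right_ne_zero_of_mul hm)
    have htri := abs_sub_abs_le_abs_sub k (2 * m)
    rw [abs_mul, abs_two] at htri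
    rw [pow_succ]
    linarith

theorem hasFiniteSupport_iterate_sdOp_diracI (ha : ∀ k, a k ≠ 0 → |k| ≤ (N : ℤ)) (n : ℕ) :
    HasFiniteSupport ((sdOp a)^[n] diracI) :=
  hasFiniteSupport_of_abs_le _ fun _ => abs_le_of_iterate_sdOp_diracI_ne_zero ha n

theorem iterate_sdRow_apply (ha : ∀ k, a k ≠ 0 → |k| ≤ (N : ℤ)) (w : ℤ → Fin r → ℂ) (n : ℕ)
    (k : ℤ) : ((sdRow a)^[n] w) k = ∑ᶠ l, w l ᵥ* ((sdOp a)^[n] diracI) (k - 2 ^ n * l) := by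
  induction n generalizing k with
  | zero =>
    rw [finsum_eq_single _ k fun l hl => by simp [diracI, sub_eq_zero, Ne.symm hl]]
    simp [diracI]
  | succ n ih =>
    set A := (sdOp a)^[n] diracI
    have hA : ∀ m, HasFiniteSupport fun l => A (m - 2 ^ n * l) := fun m =>
      (hasFiniteSupport_iterate_sdOp_diracI ha n).comp_sub_mul m (by positivity)
    have ha' : HasFiniteSupport fun m => a (k - 2 * m) :=
      (hasFiniteSupport_of_abs_le _ ha).comp_sub_mul k two_ne_zero
    have hsucc : ∀ l, ((sdOp a)^[n + 1] diracI) (k - 2 ^ (n + 1) * l) =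
        (2 : ℂ) • ∑ᶠ m, A (m - 2 ^ n * l) * a (k - 2 * m) := by
      intro l
      rw [iterate_succ_apply', sdOp, ← finsum_comp_equiv (Equiv.subRight (2 ^ n * l))]
      congr 1
      refine finsum_congr fun m => ?_
      simp only [Equiv.subRight_apply, A]
      ring_nf
    calc ((sdRow a)^[n + 1] w) k
        = (2 : ℂ) • ∑ᶠ m, ∑ᶠ l, w l ᵥ* (A (m - 2 ^ n * l) * a (k - 2 * m)) := by
          rw [iterate_succ_apply', sdRow]
          congr 1
          refine finsum_congr fun m => ?_
          rw [ih, finsum_vecMul ((hA m).of_apply_eq_zero fun l h => by simp [h])]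
          exact finsum_congr fun l => vecMul_vecMul _ _ _
      _ = (2 : ℂ) • ∑ᶠ l, ∑ᶠ m, w l ᵥ* (A (m - 2 ^ n * l) * a (k - 2 * m)) := by
          rw [finsum_comm_of_finite ha' (fun m l h => ?_) (fun m _ => ?_)]
          · exact right_ne_zero_of_mul (fun h0 => h (by rw [h0, vecMul_zero]))
          · exact (hA m).of_apply_eq_zero fun l h => by simp [h]
      _ = ∑ᶠ l, w l ᵥ* ((sdOp a)^[n + 1] diracI) (k - 2 ^ (n + 1) * l) := by
          rw [smul_finsum]
          refine finsum_congr fun l => ?_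
          rw [hsucc, vecMul_smul, vecMul_finsum _ (ha'.of_apply_eq_zero fun m h => by simp [h])]

variable {u : ℤ → Fin r → ℂ}

theorem abs_le_of_sdIterConv_ne_zero (ha : ∀ k, a k ≠ 0 → |k| ≤ (N : ℤ))
    (hu : ∀ k, u k ≠ 0 → |k| ≤ (N : ℤ)) {n : ℕ} {k : ℤ} (hk : sdIterConv a n u k ≠ 0) :
    |k| ≤ 2 ^ n * N := by
  obtain ⟨l, hl⟩ : ∃ l, ((sdOp a)^[n] diracI) (k - l) *ᵥ u l ≠ 0 := by
    by_contra! h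
    exact hk (finsum_eq_zero_of_forall_eq_zero h)
  have hkl := abs_le_of_iterate_sdOp_diracI_ne_zero ha n fun h0 => hl (by rw [h0, zero_mulVec])
  have hul := hu l fun h0 => hl (by rw [h0, mulVec_zero])
  have htri := abs_sub_abs_le_abs_sub k l
  linarith

theorem finsum_iterate_sdRow_dotProduct (ha : ∀ k, a k ≠ 0 → |k| ≤ (N : ℤ))
    (hu : ∀ k, u k ≠ 0 → |k| ≤ (N : ℤ)) (w : ℤ → Fin r → ℂ) (n : ℕ) (k : ℤ) :
    ∑ᶠ l, ((sdRow a)^[n] w) (k - l) ⬝ᵥ u l = ∑ᶠ q, w q ⬝ᵥ sdIterConv a n u (k - 2 ^ n * q) := by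
  set A := (sdOp a)^[n] diracI
  have hA : ∀ m, HasFiniteSupport fun q => w q ᵥ* A (m - 2 ^ n * q) := fun m =>
    ((hasFiniteSupport_iterate_sdOp_diracI ha n).comp_sub_mul m
      (pow_ne_zero n two_ne_zero)).of_apply_eq_zero fun q h => by simp [A, h]
  have hu' : HasFiniteSupport u := hasFiniteSupport_of_abs_le _ hu
  calc ∑ᶠ l, ((sdRow a)^[n] w) (k - l) ⬝ᵥ u l
      = ∑ᶠ l, ∑ᶠ q, (w q ᵥ* A (k - l - 2 ^ n * q)) ⬝ᵥ u l :=
        finsum_congr fun l => by rw [iterate_sdRow_apply ha, finsum_dotProduct (hA _)]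
    _ = ∑ᶠ q, ∑ᶠ l, (w q ᵥ* A (k - l - 2 ^ n * q)) ⬝ᵥ u l := by
        refine finsum_comm_of_finite hu' (fun l q h h0 => h ?_) fun l _ => ?_
        · rw [h0, dotProduct_zero]
        · exact (hA _).of_apply_eq_zero fun q h => by rw [h, zero_dotProduct]
    _ = ∑ᶠ q, w q ⬝ᵥ sdIterConv a n u (k - 2 ^ n * q) := finsum_congr fun q => by
        have hfin : HasFiniteSupport fun l => A (k - 2 ^ n * q - l) *ᵥ u l :=
          hu'.of_apply_eq_zero fun l h => by rw [h, mulVec_zero]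
        rw [sdIterConv, dotProduct_finsum _ hfin]
        exact finsum_congr fun l => by rw [← dotProduct_mulVec, sub_right_comm]

theorem iterate_sdRow_error_eq_sum {K j : ℕ} {φ : ℝ → Fin r → ℂ}
    (ha : ∀ k, a k ≠ 0 → |k| ≤ (N : ℤ)) (hu : ∀ k, u k ≠ 0 → |k| ≤ (N : ℤ)) (hφc : ContDiff ℝ j φ)
    (hφs : ∀ x : ℝ, (N : ℝ) < |x| → φ x = 0) (w : ℤ → Fin r → ℂ) (β : ℂ) {n : ℕ} {k : ℤ}
    (hk : |k| ≤ 2 ^ n * K) :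
    (2 : ℂ) ^ (j * n) * ∑ᶠ l, ((sdRow a)^[n] w) (k - l) ⬝ᵥ u l -
        β * iteratedDeriv j (fun x : ℝ => ∑ᶠ l : ℤ, w l ⬝ᵥ φ (x - l)) (((2 : ℝ) ^ n)⁻¹ * k) =
      ∑ q ∈ Icc (-(N : ℤ) - K) (N + K), w q ⬝ᵥ
        ((2 : ℂ) ^ (j * n) • sdIterConv a n u (k - 2 ^ n * q) -
          β • iteratedDeriv j φ (((2 : ℝ) ^ n)⁻¹ * ((k - 2 ^ n * q : ℤ) : ℝ))) := by
  have hpoint : ∀ q : ℤ,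
      ((2 : ℝ) ^ n)⁻¹ * k - q = ((2 : ℝ) ^ n)⁻¹ * ((k - 2 ^ n * q : ℤ) : ℝ) := by
    intro q
    push_cast
    field_simp
  have hconv : support (fun q => w q ⬝ᵥ sdIterConv a n u (k - 2 ^ n * q)) ⊆
      Icc (-(N : ℤ) - K) (N + K) := fun q hq =>
    mem_Icc_of_abs_sub_two_pow_mul_le hk
      (abs_le_of_sdIterConv_ne_zero ha hu fun h0 => hq (by simp only [h0, dotProduct_zero]))
  have hderiv : support (fun q => w q ⬝ᵥ
      iteratedDeriv j φ (((2 : ℝ) ^ n)⁻¹ * ((k - 2 ^ n * q : ℤ) : ℝ))) ⊆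
      Icc (-(N : ℤ) - K) (N + K) := by
    intro q hq
    refine mem_Icc_of_abs_sub_two_pow_mul_le hk (not_lt.1 fun h => hq ?_)
    have hlt : (N : ℝ) < |((2 : ℝ) ^ n)⁻¹ * ((k - 2 ^ n * q : ℤ) : ℝ)| := by
      rw [abs_mul, abs_inv, abs_pow, abs_two, lt_inv_mul_iff₀ (by positivity)]
      exact_mod_cast h
    simp only [iteratedDeriv_eq_zero_of_lt_abs hφs j hlt, dotProduct_zero]
  rw [finsum_iterate_sdRow_dotProduct ha hu, iteratedDeriv_finsum_dotProduct_translate hφc hφs]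
  simp_rw [hpoint]
  rw [finsum_eq_sum_of_support_subset _ hconv, finsum_eq_sum_of_support_subset _ hderiv,
    mul_sum, mul_sum, ← sum_sub_distrib]
  refine sum_congr rfl fun q _ => ?_
  rw [dotProduct_sub, dotProduct_smul, dotProduct_smul, smul_eq_mul, smul_eq_mul]

end Subdivision

theorem subdivision_error_bound_general {r : ℕ} (N K : ℕ)
    (a : ℤ → Matrix (Fin r) (Fin r) ℂ) (ha : ∀ k : ℤ, a k ≠ 0 → |k| ≤ (N : ℤ))
    (u : ℤ → Fin r → ℂ) (hu : ∀ k : ℤ, u k ≠ 0 → |k| ≤ (N : ℤ))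
    (w₀ : ℤ → Fin r → ℂ)
    (j : ℕ) (φ : ℝ → Fin r → ℂ) (hφc : ContDiff ℝ (j : ℕ∞) φ)
    (hφs : ∀ x : ℝ, (N : ℝ) < |x| → φ x = 0)
    (β : ℂ) (n : ℕ) (B : ℝ)
    (hB : ∀ k : ℤ,
      ‖(2 : ℂ) ^ (j * n) • (∑ᶠ l : ℤ, (((sdOp a)^[n] diracI) (k - l)).mulVec (u l)) -
        β • iteratedDeriv j φ (((2 : ℝ) ^ n)⁻¹ * (k : ℝ))‖ ≤ B) :
    ∀ k : ℤ, |k| ≤ 2 ^ n * (K : ℤ) →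
      ‖(2 : ℂ) ^ (j * n) *
          (∑ᶠ l : ℤ, dotProduct (((sdRow a)^[n] w₀) (k - l)) (u l)) -
        β * iteratedDeriv j
          (fun x : ℝ => ∑ᶠ l : ℤ, dotProduct (w₀ l) (φ (x - (l : ℝ))))
          (((2 : ℝ) ^ n)⁻¹ * (k : ℝ))‖ ≤
      (∑ l ∈ Finset.Icc (-(N : ℤ) - (K : ℤ)) ((N : ℤ) + (K : ℤ)),
        ∑ i : Fin r, ‖w₀ l i‖) * B := by
  intro k hk
  rw [iterate_sdRow_error_eq_sum ha hu hφc hφs w₀ β hk, sum_mul]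
  refine (norm_sum_le _ _).trans (sum_le_sum fun q _ => ?_)
  exact (norm_dotProduct_le _ _).trans (mul_le_mul_of_nonneg_left (hB _) (by positivity))

/-- On `[−2^nK, 2^nK]`, the error of the subdivision data of any initial sequence `w₀` against
`η := ∑_k w₀(k)φ(·−k)` is controlled by `C_{K,N,w₀}` times the uniform error of the subdivision
data of `δ I_r` against `φ^{(j)}`. -/
theorem subdivision_error_bound {r : ℕ} (N K : ℕ) (hK : 0 < K)
    (a : ℤ → Matrix (Fin r) (Fin r) ℂ) (ha : ∀ k : ℤ, a k ≠ 0 → |k| ≤ (N : ℤ))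
    (u : ℤ → Fin r → ℂ) (hu : ∀ k : ℤ, u k ≠ 0 → |k| ≤ (N : ℤ))
    (w₀ : ℤ → Fin r → ℂ)
    (j : ℕ) (φ : ℝ → Fin r → ℂ) (hφc : ContDiff ℝ (j : ℕ∞) φ)
    (hφs : ∀ x : ℝ, (N : ℝ) < |x| → φ x = 0)
    (β : ℂ) (n : ℕ) (B : ℝ)
    (hB : ∀ k : ℤ,
      ‖(2 : ℂ) ^ (j * n) • (∑ᶠ l : ℤ, (((sdOp a)^[n] diracI) (k - l)).mulVec (u l)) -
        β • iteratedDeriv j φ (((2 : ℝ) ^ n)⁻¹ * (k : ℝ))‖ ≤ B) :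
    ∀ k : ℤ, |k| ≤ 2 ^ n * (K : ℤ) →
      ‖(2 : ℂ) ^ (j * n) *
          (∑ᶠ l : ℤ, dotProduct (((sdRow a)^[n] w₀) (k - l)) (u l)) -
        β * iteratedDeriv j
          (fun x : ℝ => ∑ᶠ l : ℤ, dotProduct (w₀ l) (φ (x - (l : ℝ))))
          (((2 : ℝ) ^ n)⁻¹ * (k : ℝ))‖ ≤
      (∑ l ∈ Finset.Icc (-(N : ℤ) - (K : ℤ)) ((N : ℤ) + (K : ℤ)),
        ∑ i : Fin r, ‖w₀ l i‖) * B :=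
  subdivision_error_bound_general N K a ha u hu w₀ j φ hφc hφs β n B hB
end
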